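/- The coalition number of the Petersen graph equals 6. -/

import Mathlib

open Finset

/-- `S` is a dominating set of `G`: every vertex outside `S` has a neighbor in `S`. -/
def Dominates {V : Type*} (G : SimpleGraph V) (S : Finset V) : Prop :=
  ∀ v ∉ S, ∃ u ∈ S, G.Adj u v

/-- Two disjoint non-dominating sets whose union dominates form a coalition. -/
def FormsCoalition {V : Type*} [DecidableEq V] (G : SimpleGraph V) (X Y : Finset V) : Prop :=
  ¬ Dominates G X ∧ ¬ Dominates G Y ∧ Dominates G (X ∪ Y)

/-- A coalition partition: every class is a singleton dominating set, or is a
non-dominating set forming a coalition with another class. -/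
def IsCoalitionPartition {V : Type*} [Fintype V] [DecidableEq V] (G : SimpleGraph V)
    (π : Finpartition (univ : Finset V)) : Prop :=
  ∀ X ∈ π.parts, (X.card = 1 ∧ Dominates G X) ∨
    (¬ Dominates G X ∧ ∃ Y ∈ π.parts, Y ≠ X ∧ ¬ Dominates G Y ∧ Dominates G (X ∪ Y))

/-- The coalition number: the maximum order of a coalition partition. -/
noncomputable def coalitionNumber (V : Type*) [Fintype V] [DecidableEq V]
    (G : SimpleGraph V) : ℕ :=
  sSup {k | ∃ π : Finpartition (univ : Finset V), IsCoalitionPartition G π ∧ π.parts.card = k}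

def petersenK : SimpleGraph {s : Finset (Fin 5) // s.card = 2} :=
  SimpleGraph.fromRel (fun a b => Disjoint a.1 b.1)

/-!
No vertex and no pair of vertices dominates the Petersen graph, so every singleton class of a
coalition partition has a partner class with at least two vertices. A non-dominating class misses
some vertex `u`, and each of its singleton partners lies in the closed neighbourhood `N[u]`, which
has four vertices; a class of two vertices has at most one singleton partner. Moreover, if all of
`N[u]` consists of singleton classes, then every singleton class lies in `N[u]`, because its partner
avoids `N[u]` and must still dominate `u`. Weighing these partner counts against the ten vertices
bounds the number of classes by six, and an explicit partition with six classes exists.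
-/

section Domination

theorem not_dominates_iff {V : Type*} {G : SimpleGraph V} {S : Finset V} :
    ¬ Dominates G S ↔ ∃ u ∉ S, ∀ a ∈ S, ¬ G.Adj a u := by
  simp [Dominates]

variable {V : Type*} [Fintype V] [DecidableEq V] (G : SimpleGraph V) [DecidableRel G.Adj]

instance : DecidablePred (Dominates G) := fun S => by
  unfold Dominates; infer_instance

def completions (S : Finset V) : Finset V :=
  univ.filter fun v => Dominates G (insert v S)

variable {G}

theorem mem_closedNbhd_of_dominates_insert {S : Finset V} {u v : V} (hu : u ∉ S)
    (hS : ∀ a ∈ S, ¬ G.Adj a u) (hv : Dominates G (insert v S)) :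
    v ∈ insert u (G.neighborFinset u) := by
  by_contra hvu
  rw [mem_insert, SimpleGraph.mem_neighborFinset, not_or] at hvu
  obtain ⟨w, hw, hwu⟩ := hv u (by simp [hu, Ne.symm hvu.1])
  rcases mem_insert.mp hw with rfl | hwS
  · exact hvu.2 hwu.symm
  · exact hS w hwS hwu

end Domination

section CoalitionPartition

variable {V : Type*} [Fintype V] [DecidableEq V] (π : Finpartition (univ : Finset V))

def singletonVertices : Finset V := univ.filter fun v => {v} ∈ π.parts

def largeParts : Finset (Finset V) := π.parts.filter fun Z => 1 < Z.card

theorem parts_filter_card_eq_one :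
    π.parts.filter (fun Z => Z.card = 1) =
      (singletonVertices π).map ⟨singleton, singleton_injective⟩ := by
  ext Z
  simp only [mem_filter, mem_map, singletonVertices, mem_univ, true_and,
    Function.Embedding.coeFn_mk]
  constructor
  · rintro ⟨hZ, hcard⟩
    obtain ⟨v, rfl⟩ := card_eq_one.mp hcard
    exact ⟨v, hZ, rfl⟩
  · rintro ⟨v, hv, rfl⟩
    exact ⟨hv, card_singleton v⟩

theorem parts_filter_not_card_eq_one : π.parts.filter (fun Z => ¬ Z.card = 1) = largeParts π :=
  filter_congr fun Z hZ => by
    have := (π.nonempty_of_mem_parts hZ).card_pos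
    omega

theorem card_parts_eq : π.parts.card = (singletonVertices π).card + (largeParts π).card := by
  rw [← card_filter_add_card_filter_not (fun Z => Z.card = 1), parts_filter_card_eq_one,
    parts_filter_not_card_eq_one, card_map]

theorem card_singletonVertices_add_sum_card_largeParts :
    (singletonVertices π).card + ∑ Z ∈ largeParts π, Z.card = Fintype.card V := by
  rw [← card_univ, ← π.sum_card_parts,
    ← sum_filter_add_sum_filter_not π.parts (fun Z => Z.card = 1), parts_filter_card_eq_one,
    parts_filter_not_card_eq_one, sum_map]
  simp

variable {π}

theorem disjoint_singletonVertices {Z : Finset V} (hZ : Z ∈ largeParts π) :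
    Disjoint (singletonVertices π) Z := by
  rw [disjoint_left]
  intro v hv hvZ
  have hZ' := mem_filter.mp hZ
  have := π.eq_of_mem_parts (mem_filter.mp hv).2 hZ'.1 (mem_singleton_self v) hvZ
  simp [← this] at hZ'

variable {G : SimpleGraph V}

theorem not_dominates_of_mem_largeParts (hπ : IsCoalitionPartition G π) {Z : Finset V}
    (hZ : Z ∈ largeParts π) :
    ¬ Dominates G Z := by
  obtain ⟨hZ, hcard⟩ := mem_filter.mp hZ
  rcases hπ Z hZ with ⟨h, _⟩ | ⟨h, _⟩
  · omega
  · exact h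

theorem exists_largeParts_dominates_insert (hπ : IsCoalitionPartition G π)
    (hpair : ∀ a b : V, ¬ Dominates G {a, b}) {v : V}
    (hv : v ∈ singletonVertices π) : ∃ Z ∈ largeParts π, Dominates G (insert v Z) := by
  have hv := (mem_filter.mp hv).2
  rcases hπ {v} hv with ⟨_, hdom⟩ | ⟨_, Z, hZ, -, -, hdom⟩
  · exact absurd (by simpa using hdom) (hpair v v)
  · rw [← insert_eq] at hdom
    refine ⟨Z, mem_filter.mpr ⟨hZ, ?_⟩, hdom⟩
    by_contra hcard
    obtain ⟨w, rfl⟩ := card_eq_one.mp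
      (le_antisymm (not_lt.mp hcard) (π.nonempty_of_mem_parts hZ).card_pos)
    exact hpair v w hdom

variable [DecidableRel G.Adj]

theorem singletonVertices_subset_closedNbhd (hπ : IsCoalitionPartition G π)
    (hpair : ∀ a b : V, ¬ Dominates G {a, b}) {u : V}
    (hu : insert u (G.neighborFinset u) ⊆ singletonVertices π) :
    singletonVertices π ⊆ insert u (G.neighborFinset u) := by
  intro v hv
  obtain ⟨Z, hZ, hdom⟩ := exists_largeParts_dominates_insert hπ hpair hv
  have hZT := disjoint_singletonVertices hZ
  refine mem_closedNbhd_of_dominates_insert (disjoint_left.mp hZT (hu (mem_insert_self u _)))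
    (fun a ha hau => disjoint_right.mp hZT ha (hu (mem_insert_of_mem ?_))) hdom
  exact (G.mem_neighborFinset u a).mpr hau.symm

theorem card_singletonVertices_le_sum (hπ : IsCoalitionPartition G π)
    (hpair : ∀ a b : V, ¬ Dominates G {a, b}) :
    (singletonVertices π).card ≤
      ∑ Z ∈ largeParts π, (singletonVertices π ∩ completions G Z).card := by
  refine (card_le_card fun v hv => ?_).trans card_biUnion_le
  obtain ⟨Z, hZ, hdom⟩ := exists_largeParts_dominates_insert hπ hpair hv
  exact mem_biUnion.mpr ⟨Z, hZ, mem_inter.mpr ⟨hv, mem_filter.mpr ⟨mem_univ v, hdom⟩⟩⟩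

theorem card_inter_completions_le (hπ : IsCoalitionPartition G π)
    (hpair : ∀ a b : V, ¬ Dominates G {a, b}) (hdeg : ∀ u, G.degree u ≤ 3) {Z : Finset V}
    (hZ : Z ∈ largeParts π) :
    (singletonVertices π ∩ completions G Z).card ≤ 4 ∧
      (4 < (singletonVertices π).card → (singletonVertices π ∩ completions G Z).card ≤ 3) := by
  obtain ⟨u, hu, hZu⟩ := not_dominates_iff.mp (not_dominates_of_mem_largeParts hπ hZ)
  set T := singletonVertices π
  set N := insert u (G.neighborFinset u)
  have hN : N.card ≤ 4 := (card_insert_le _ _).trans (Nat.add_le_add_right (hdeg u) 1)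
  have hsub : T ∩ completions G Z ⊆ T ∩ N :=
    inter_subset_inter_left fun v hv =>
      mem_closedNbhd_of_dominates_insert hu hZu (mem_filter.mp hv).2
  have hcard := card_le_card hsub
  refine ⟨hcard.trans ((card_le_card inter_subset_right).trans hN), fun hT => ?_⟩
  by_contra! h
  have hNT : N ⊆ T := by
    rw [← eq_of_subset_of_card_le inter_subset_right (by omega : N.card ≤ (T ∩ N).card)]
    exact inter_subset_left
  have hTN : T ⊆ N := singletonVertices_subset_closedNbhd hπ hpair hNT
  have := card_le_card hTN
  omega

theorem card_parts_le_six (hπ : IsCoalitionPartition G π)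
    (hV : Fintype.card V = 10) (hdeg : ∀ u, G.degree u ≤ 3)
    (hpair : ∀ a b : V, ¬ Dominates G {a, b})
    (htriple : ∀ a b : V, (completions G {a, b}).card ≤ 1) : π.parts.card ≤ 6 := by
  set T := singletonVertices π
  set B := largeParts π
  set c := fun Z => (T ∩ completions G Z).card
  have hpart : ∀ Z ∈ B, 1 < Z.card ∧ c Z ≤ 4 ∧ (Z.card = 2 → c Z ≤ 1) ∧
      (4 < T.card → c Z ≤ 3) := by
    intro Z hZ
    refine ⟨(mem_filter.mp hZ).2, (card_inter_completions_le hπ hpair hdeg hZ).1,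
      fun h2 => ?_, (card_inter_completions_le hπ hpair hdeg hZ).2⟩
    obtain ⟨a, b, -, rfl⟩ := card_eq_two.mp h2
    exact (card_le_card inter_subset_right).trans (htriple a b)
  have hweighted : ∀ m w, (∀ Z ∈ B, c Z + w ≤ m * Z.card) →
      ∑ Z ∈ B, c Z + w * B.card ≤ m * ∑ Z ∈ B, Z.card := by
    intro m w h
    rw [mul_sum, mul_comm, ← smul_eq_mul, ← sum_const, ← sum_add_distrib]
    exact sum_le_sum h
  have hcover : T.card ≤ ∑ Z ∈ B, c Z := card_singletonVertices_le_sum hπ hpair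
  have hsize : T.card + ∑ Z ∈ B, Z.card = 10 :=
    hV ▸ card_singletonVertices_add_sum_card_largeParts π
  have hcount : π.parts.card = T.card + B.card := card_parts_eq π
  -- Sum `c Z + 5 ≤ 3 * #Z`, or `c Z + 3 ≤ 2 * #Z` once there are five singletons, over `B`.
  rcases le_or_gt T.card 4 with hT | hT
  · have := hweighted 3 5 fun Z hZ => by have := hpart Z hZ; omega
    omega
  · have := hweighted 2 3 fun Z hZ => by have := hpart Z hZ; omega
    omega

end CoalitionPartition

section Petersen

instance : DecidableRel petersenK.Adj := fun a b =>
  decidable_of_iff' _ (SimpleGraph.fromRel_adj _ a b)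

theorem petersenK_not_dominates_pair : ∀ a b, ¬ Dominates petersenK {a, b} := by
  decide +kernel

theorem petersenK_isRegularOfDegree : petersenK.IsRegularOfDegree 3 := by
  unfold SimpleGraph.IsRegularOfDegree
  decide +kernel

theorem petersenK_card_completions_pair_le_one :
    ∀ a b, (completions petersenK {a, b}).card ≤ 1 := by
  decide +kernel

def petersenVertex (i j : Fin 5) (h : i ≠ j := by decide) :
    {s : Finset (Fin 5) // s.card = 2} :=
  ⟨{i, j}, card_pair h⟩

local notation "⟪" i ", " j "⟫" => petersenVertex i j

def petersenCoalitionPartition :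
    Finpartition (univ : Finset {s : Finset (Fin 5) // s.card = 2}) where
  parts := {{⟪1, 4⟫, ⟪2, 4⟫, ⟪3, 4⟫}, {⟪0, 3⟫, ⟪1, 3⟫, ⟪2, 3⟫},
    {⟪0, 1⟫}, {⟪0, 2⟫}, {⟪0, 4⟫}, {⟪1, 2⟫}}
  supIndep := by decide +kernel
  sup_parts := by decide +kernel
  bot_notMem := by decide +kernel

theorem isCoalitionPartition_petersenCoalitionPartition :
    IsCoalitionPartition petersenK petersenCoalitionPartition := by
  unfold IsCoalitionPartition
  decide +kernel

theorem card_petersenCoalitionPartition : petersenCoalitionPartition.parts.card = 6 := by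
  decide +kernel

end Petersen

theorem stmt9 : coalitionNumber {s : Finset (Fin 5) // s.card = 2} petersenK = 6 := by
  refine IsGreatest.csSup_eq ⟨⟨petersenCoalitionPartition,
    isCoalitionPartition_petersenCoalitionPartition, card_petersenCoalitionPartition⟩, ?_⟩
  rintro k ⟨π, hπ, rfl⟩
  exact card_parts_le_six hπ (by decide) (fun u => (petersenK_isRegularOfDegree.degree_eq u).le)
    petersenK_not_dominates_pair petersenK_card_completions_pair_le_one
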